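/- arXiv:1104.4557 — 9 statements merged into one kernel-verified Lean document; each statement's English description precedes it below -/
import Mathlib

section
/- Let A(x) = (a_{ij}(x)) be an n × n matrix whose entries are ℓ-times differentiable (or polynomial) functions of x. Then the ℓ-th derivative of det(A) equals ∑_{ℓ_1 + ... + ℓ_n = ℓ} multinomial(ℓ; ℓ_1, ..., ℓ_n) · det(B), where B is the matrix whose i-th row is the ℓ_i-th derivative of the i-th row of A. -/
/-!
Expanding the determinant as a signed sum over permutations of products `∏ i, A i (σ i)`
reduces the claim to the Leibniz rule for an iterated derivative of a finite product. That rule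
is cleanest for Hasse derivatives `D_k = derivative^[k] / k!`, which satisfy it with no
coefficients at all; since `derivative^[ℓ] = ℓ! • D_ℓ`, the multinomial coefficient arises as
`ℓ! / ∏ i, ℓ_i!`.
-/

open Polynomial Finset

theorem Matrix.det_apply_row {n R : Type*} [DecidableEq n] [Fintype n] [CommRing R]
    (M : Matrix n n R) : M.det = ∑ σ : Equiv.Perm n, Equiv.Perm.sign σ • ∏ i, M i (σ i) := by
  rw [← det_transpose, det_apply]
  rfl

namespace Polynomial

variable {R ι : Type*} [CommRing R] [DecidableEq ι]

theorem hasseDeriv_prod (s : Finset ι) (f : ι → R[X]) (ℓ : ℕ) :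
    hasseDeriv ℓ (∏ i ∈ s, f i) = ∑ k ∈ s.piAntidiag ℓ, ∏ i ∈ s, hasseDeriv (k i) (f i) := by
  induction s using Finset.cons_induction generalizing ℓ with
  | empty => cases ℓ <;> simp [hasseDeriv_apply_one]
  | cons a s ha ih =>
    rw [prod_cons, hasseDeriv_mul, piAntidiag_cons ha, sum_disjiUnion]
    refine sum_congr rfl fun p _ => ?_
    rw [ih, mul_sum, sum_map]
    refine sum_congr rfl fun k hk => ?_
    have hka : k a = 0 := by_contra fun h => ha ((mem_piAntidiag.1 hk).2 a h)
    have hks : ∀ i ∈ s, i ≠ a := fun i hi h => ha (h ▸ hi)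
    rw [addRightEmbedding_apply, prod_cons, Pi.add_apply, hka, if_pos rfl, zero_add]
    congr 1
    exact prod_congr rfl fun i hi => by simp [hks i hi]

theorem iterate_derivative_prod (s : Finset ι) (f : ι → R[X]) (ℓ : ℕ) :
    derivative^[ℓ] (∏ i ∈ s, f i)
      = ∑ k ∈ s.piAntidiag ℓ, (Nat.multinomial s k : R[X]) * ∏ i ∈ s, derivative^[k i] (f i) := by
  rw [← factorial_smul_hasseDeriv, LinearMap.smul_apply, hasseDeriv_prod, smul_sum]
  refine sum_congr rfl fun k hk => ?_
  simp only [← factorial_smul_hasseDeriv, LinearMap.smul_apply]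
  simp only [nsmul_eq_mul, prod_mul_distrib]
  rw [← (mem_piAntidiag.1 hk).1, ← Nat.multinomial_spec]
  push_cast
  ring

end Polynomial

/-- ℓ-th derivative of a determinant: a Leibniz-type formula with multinomial
coefficients, rows differentiated ℓ_i times with ℓ_1 + ... + ℓ_n = ℓ. -/
theorem iterated_derivative_det {R : Type*} [CommRing R] (n ℓ : ℕ)
    (A : Matrix (Fin n) (Fin n) (Polynomial R)) :
    (fun q : Polynomial R => Polynomial.derivative q)^[ℓ] A.det
      = ∑ c ∈ Finset.Nat.antidiagonalTuple n ℓ,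
          ((Nat.multinomial Finset.univ c : ℕ) : Polynomial R) *
            Matrix.det (fun i j =>
              (fun q : Polynomial R => Polynomial.derivative q)^[c i] (A i j)) := by
  rw [← piAntidiag_univ_fin_eq_antidiagonalTuple, A.det_apply_row]
  simp only [iterate_derivative_sum, iterate_derivative_smul, iterate_derivative_prod, smul_sum]
  rw [sum_comm]
  refine sum_congr rfl fun c _ => .trans ?_ (congrArg (_ * ·) (Matrix.det_apply_row _)).symm
  rw [mul_sum]
  exact sum_congr rfl fun σ _ => (mul_smul_comm _ _ _).symm
end

section
/- Let T, d, D = d+1, r be positive integers with D·r = D + T, and let V'(a_1) be the (Dr) × (Dr) matrix over the polynomial ring ℚ[a_1, a_2, ..., a_r] whose rows are the coefficient vectors of (x + a_i)^{T+j} for 1 ≤ i ≤ r, 0 ≤ j ≤ d. Viewing f(a_1) = det(V') as a polynomial in a_1, the polynomial (a_1 − a_2)^{D²} divides f(a_1). -/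
/-!
Write `a₁ = a₂ + e` and expand every row of the first block by the binomial theorem,
`(x + a₁)^(T+j) = ∑ₖ C(T+j, k) eᵏ (x + a₂)^(T+j-k)`. By multilinearity the determinant
is a sum of terms `e^(∑ⱼ κⱼ)` times a determinant whose first block consists of the
coefficient vectors of `(x + a₂)^(T+j-κⱼ)`. That determinant vanishes unless these
exponents are pairwise distinct and avoid the exponents `T, …, T+d` of the second block,
i.e. unless the `κⱼ - j` are distinct positive integers; and then
`∑ⱼ κⱼ ≥ ∑ⱼ j + (1 + ⋯ + D) = D²`.
-/

open Polynomial Finset Function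

theorem Polynomial.X_add_C_add_pow {R : Type*} [CommSemiring R] (b e : R) (m : ℕ) :
    (X + C (b + e)) ^ m =
      ∑ k ∈ range (m + 1), C (m.choose k * e ^ k) * (X + C b) ^ (m - k) := by
  rw [C_add, ← add_assoc, add_comm, add_pow]
  refine sum_congr rfl fun k _ => ?_
  rw [C_mul, C_pow, ← C_eq_natCast]
  ring

theorem Finset.sum_range_two_mul_add_one {R : Type*} [CommSemiring R] (n : ℕ) :
    ∑ i ∈ range n, (2 * (i : R) + 1) = n ^ 2 := by
  induction n with
  | zero => simp
  | succ n ih => rw [sum_range_succ, ih]; push_cast; ring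

theorem sq_le_sum_of_lt_of_injective_sub {D : ℕ} (κ : Fin D → ℕ)
    (hlt : ∀ j : Fin D, (j : ℕ) < κ j) (hinj : Injective fun j => (κ j : ℤ) - j) :
    D ^ 2 ≤ ∑ j, κ j := by
  have hlow := sum_range_le_sum (s := univ.image fun j => (κ j : ℤ) - j) (c := 1) (by
    simp only [mem_image, mem_univ, true_and, forall_exists_index, forall_apply_eq_imp_iff]
    exact fun j => by have := hlt j; omega)
  rw [card_image_of_injective _ hinj, sum_image fun _ _ _ _ h => hinj h, card_univ,
    Fintype.card_fin, sum_sub_distrib, Fin.sum_univ_eq_sum_range (fun j => (j : ℤ))] at hlow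
  have hsplit : ∑ i ∈ range D, (2 * (i : ℤ) + 1) =
      ∑ i ∈ range D, (1 + (i : ℤ)) + ∑ i ∈ range D, (i : ℤ) := by
    rw [← sum_add_distrib]
    exact sum_congr rfl fun _ _ => by ring
  have : (D : ℤ) ^ 2 ≤ ∑ j, (κ j : ℤ) := by
    rw [← sum_range_two_mul_add_one]
    linarith
  exact_mod_cast this

theorem Matrix.pow_dvd_det_of_row_eq_sum {R ι : Type*} [CommRing R] [Fintype ι]
    [DecidableEq ι] (M : Matrix ι ι R) (e : R) (K : ι → Finset ℕ) (c : ι → ℕ → R)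
    (v : ι → ℕ → ι → R)
    (hM : ∀ p, M p = ∑ k ∈ K p, (c p k * e ^ k) • v p k) (N : ℕ)
    (hv : ∀ κ ∈ Fintype.piFinset K, ∑ p, κ p < N → (Matrix.of fun p => v p (κ p)).det = 0) :
    e ^ N ∣ M.det := by
  have hexpand : M.det = ∑ κ ∈ Fintype.piFinset K,
      ((∏ p, c p (κ p)) * e ^ ∑ p, κ p) * (Matrix.of fun p => v p (κ p)).det := by
    rw [show M = fun p => ∑ k ∈ K p, (c p k * e ^ k) • v p k from funext hM]
    refine (detRowAlternating.toMultilinearMap.map_sum_finset _ K).trans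
      (sum_congr rfl fun κ _ => ?_)
    rw [detRowAlternating.toMultilinearMap.map_smul_univ (fun p => c p (κ p) * e ^ κ p),
      prod_mul_distrib, prod_pow_eq_pow_sum, smul_eq_mul]
    rfl
  rw [hexpand]
  refine dvd_sum fun κ hκ => ?_
  rcases le_or_gt N (∑ p, κ p) with hN | hN
  · exact dvd_mul_of_dvd_left (dvd_mul_of_dvd_right (pow_dvd_pow e hN) _) _
  · rw [hv κ hκ hN, mul_zero]
    exact dvd_zero _

theorem pow_sq_dvd_det_coeff_X_add_C_pow {R ι : Type*} [CommRing R] [Fintype ι]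
    [DecidableEq ι] {D : ℕ} (T : ℕ) (a : ι → R) (col : ι × Fin D → ℕ) {i₀ i₁ : ι} (hi : i₀ ≠ i₁) :
    (a i₀ - a i₁) ^ D ^ 2 ∣
      (Matrix.of fun p q : ι × Fin D =>
        ((X + C (a p.1)) ^ (T + (p.2 : ℕ))).coeff (col q)).det := by
  set M := Matrix.of fun p q : ι × Fin D => ((X + C (a p.1)) ^ (T + (p.2 : ℕ))).coeff (col q)
  let row (m : ℕ) : ι × Fin D → R := fun q => ((X + C (a i₁)) ^ m).coeff (col q)
  refine M.pow_dvd_det_of_row_eq_sum (a i₀ - a i₁)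
    (fun p => if p.1 = i₀ then range (T + p.2 + 1) else {0})
    (fun p k => if p.1 = i₀ then ((T + p.2).choose k : R) else 1)
    (fun p k => if p.1 = i₀ then row (T + p.2 - k) else M p) (fun p => ?_) _
    fun κ hκ hsum => ?_
  · by_cases hp : p.1 = i₀
    · funext q
      simp only [hp, if_true, Finset.sum_apply, Pi.smul_apply, smul_eq_mul, row, M,
        Matrix.of_apply]
      rw [← add_sub_cancel (a i₁) (a i₀), X_add_C_add_pow, finsetSum_coeff]
      simp only [coeff_C_mul, add_sub_cancel, mul_assoc]
    · simp [hp]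
  · simp only [Fintype.mem_piFinset] at hκ
    have hκ₀ : ∀ p : ι × Fin D, p.1 ≠ i₀ → κ p = 0 := fun p hp => by simpa [hp] using hκ p
    have hκle : ∀ j : Fin D, κ (i₀, j) ≤ T + j := fun j => by
      simpa [Nat.lt_succ_iff] using hκ (i₀, j)
    have hsum' : ∑ j, κ (i₀, j) < D ^ 2 := by
      rwa [Fintype.sum_prod_type, Fintype.sum_eq_single i₀ fun i hi =>
        sum_eq_zero fun j _ => hκ₀ (i, j) hi] at hsum
    by_contra hdet
    have hlt : ∀ j : Fin D, (j : ℕ) < κ (i₀, j) := by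
      intro j
      by_contra! hj
      refine hdet (Matrix.det_zero_of_row_eq (i := (i₀, j))
        (j := (i₁, ⟨j - κ (i₀, j), by omega⟩)) (by simp [hi]) ?_)
      funext q
      simp only [Matrix.of_apply, if_true, hκ₀ (i₁, _) hi.symm, hi.symm, if_false, row, M]
      congr 3
      omega
    have hinj : Injective fun j : Fin D => (κ (i₀, j) : ℤ) - j := by
      intro j j' h
      by_contra hne
      refine hdet (Matrix.det_zero_of_row_eq (i := (i₀, j)) (j := (i₀, j'))
        (by simpa using hne) ?_)
      have hexp : T + j - κ (i₀, j) = T + j' - κ (i₀, j') := by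
        have := hκle j; have := hκle j'; simp only at h; omega
      funext q
      simp only [Matrix.of_apply, if_true, hexp]
    exact (sq_le_sum_of_lt_of_injective_sub _ hlt hinj).not_gt hsum'

open Polynomial in
/-- (a_1 - a_2)^{D²} divides det(V'), where the rows of V' are the coefficient
vectors of (x + a_i)^{T+j}, over ℚ[a_1, ..., a_r]. -/
theorem vandermonde_power_divides_det (T r D : ℕ) (hr : 2 ≤ r) :
    ((MvPolynomial.X (⟨0, by omega⟩ : Fin r) - MvPolynomial.X ⟨1, by omega⟩) ^ (D ^ 2)) ∣
      Matrix.det (fun (row col : Fin r × Fin D) =>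
        ((X + C (MvPolynomial.X row.1 : MvPolynomial (Fin r) ℚ)) ^ (T + (row.2 : ℕ))).coeff
          ((col.1 : ℕ) * D + (col.2 : ℕ))) :=
  pow_sq_dvd_det_coeff_X_add_C_pow T MvPolynomial.X _ (by simp)
end

section
/- For n, m, ℓ ∈ ℕ with ℓ + m ≤ n, the (m+1) × (m+1) determinant whose (i, j)-entry (0-indexed, i from top, j from left) is binom(n + m − i, ℓ + m − j) equals ∏_{j=0}^{m} binom(n+m, ℓ+j) / ∏_{j=0}^{m} binom(n+m, j). -/
/-!
Reversing the order of rows and columns turns the matrix into `(binom(n+i, ℓ+j))_{i,j ≤ m}`, and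
`binom(n+i, ℓ+j) = (n+i)!/(n-ℓ+i)! · (ℓ+j)!⁻¹ · (n-ℓ+i)(n-ℓ+i-1)⋯(n-ℓ+i-j+1)`. Pulling out the row
and column factors leaves the matrix of falling factorials `(x_i)^{(j)}` at `x_i = n-ℓ+i`; these are
monic polynomials of degree `j`, so its determinant is the Vandermonde determinant of `m+1`
consecutive integers, `∏_{j ≤ m} j!`. Reflecting `j ↦ m - j` in the row factors matches the result
with the quotient of binomial products.
-/

open Finset Matrix
open scoped Nat

namespace Matrix

variable {R : Type*} [CommRing R] [IsDomain R]

theorem det_descPochhammer_eval_add (m : ℕ) (x : R) :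
    det (of fun i j : Fin (m + 1) => (descPochhammer R j).eval (((i : ℕ) : R) + x)) =
      m.superFactorial := by
  rw [← det_eval_matrixOfPolynomials_eq_det_vandermonde _ _
      (fun j => descPochhammer_natDegree R j) (fun j => monic_descPochhammer R j),
    det_vandermonde_add, det_vandermonde_id_eq_superFactorial]

theorem det_descFactorial_add (m c : ℕ) :
    det (of fun i j : Fin (m + 1) => ((c + i).descFactorial j : R)) = m.superFactorial := by
  rw [← det_descPochhammer_eval_add m (c : R)]
  congr with i j
  rw [← descPochhammer_eval_eq_descFactorial, Nat.cast_add, add_comm]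

end Matrix

variable {K : Type*} [Field K] [CharZero K]

theorem Nat.cast_choose_add_eq_mul_descFactorial {a ℓ j : ℕ} (h : ℓ + j ≤ a) :
    (a.choose (ℓ + j) : K) = a ! / (a - ℓ)! * ((ℓ + j)! : K)⁻¹ * (a - ℓ).descFactorial j := by
  rw [Nat.cast_choose K h, ← Nat.factorial_mul_descFactorial (show j ≤ a - ℓ by omega),
    show a - (ℓ + j) = a - ℓ - j by omega]
  have : ((a - ℓ).descFactorial j : K) ≠ 0 := by
    exact_mod_cast (Nat.descFactorial_pos.mpr (by omega)).ne'
  push_cast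
  field_simp

theorem Nat.cast_choose_add_div_cast_choose {N ℓ j : ℕ} (h : ℓ + j ≤ N) :
    (N.choose (ℓ + j) : K) / N.choose j = (N - j)! / (N - j - ℓ)! * ((ℓ + j)! : K)⁻¹ * j ! := by
  rw [Nat.cast_choose K h, Nat.cast_choose K (show j ≤ N by omega),
    show N - (ℓ + j) = N - j - ℓ by omega]
  have : (N ! : K) ≠ 0 := Nat.cast_ne_zero.mpr N.factorial_ne_zero
  field_simp

theorem det_choose_add_add {n ℓ m : ℕ} (h : ℓ + m ≤ n) :
    det (of fun i j : Fin (m + 1) => ((n + i).choose (ℓ + j) : K)) =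
      (∏ i ∈ range (m + 1), ((n + i)! / (n - ℓ + i)! : K)) *
        (∏ j ∈ range (m + 1), ((ℓ + j)! : K)⁻¹) * m.superFactorial := by
  have factor : of (fun i j : Fin (m + 1) => ((n + i).choose (ℓ + j) : K)) =
      diagonal (fun i : Fin (m + 1) => ((n + i)! / (n - ℓ + i)! : K)) *
        of (fun i j : Fin (m + 1) => ((n - ℓ + i).descFactorial j : K)) *
        diagonal (fun j : Fin (m + 1) => ((ℓ + j)! : K)⁻¹) := by
    ext i j
    rw [mul_diagonal, diagonal_mul, of_apply, of_apply,
      Nat.cast_choose_add_eq_mul_descFactorial (by omega), show n + i - ℓ = n - ℓ + i by omega]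
    ring
  rw [factor, det_mul, det_mul, det_diagonal, det_diagonal, det_descFactorial_add,
    Fin.prod_univ_eq_prod_range (fun i => ((n + i)! / (n - ℓ + i)! : K)),
    Fin.prod_univ_eq_prod_range (fun j => ((ℓ + j)! : K)⁻¹)]
  ring

theorem prod_choose_add_div_prod_choose {n ℓ m : ℕ} (h : ℓ + m ≤ n) :
    (∏ j ∈ range (m + 1), ((n + m).choose (ℓ + j) : K)) /
        ∏ j ∈ range (m + 1), ((n + m).choose j : K) =
      (∏ i ∈ range (m + 1), ((n + i)! / (n - ℓ + i)! : K)) *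
        (∏ j ∈ range (m + 1), ((ℓ + j)! : K)⁻¹) * ∏ j ∈ range (m + 1), (j ! : K) := by
  rw [← prod_range_reflect (fun i => ((n + i)! / (n - ℓ + i)! : K)), ← prod_div_distrib,
    ← prod_mul_distrib, ← prod_mul_distrib]
  refine prod_congr rfl fun j hj => ?_
  have hj : j ≤ m := Nat.lt_succ_iff.mp (mem_range.mp hj)
  rw [Nat.add_sub_cancel, Nat.cast_choose_add_div_cast_choose (by omega),
    show n + m - j = n + (m - j) by omega, show n + (m - j) - ℓ = n - ℓ + (m - j) by omega]

/-- Binomial Hankel determinant: det(binom(n+m-i, ℓ+m-j))_{0 ≤ i,j ≤ m}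
= ∏_{j=0}^m binom(n+m, ℓ+j) / ∏_{j=0}^m binom(n+m, j), for ℓ + m ≤ n. -/
theorem binomial_hankel_det (n m ℓ : ℕ) (h : ℓ + m ≤ n) :
    Matrix.det (fun i j : Fin (m + 1) =>
        (((n + m - (i : ℕ)).choose (ℓ + m - (j : ℕ)) : ℕ) : ℚ))
    = (∏ j ∈ Finset.range (m + 1), (((n + m).choose (ℓ + j) : ℕ) : ℚ)) /
        (∏ j ∈ Finset.range (m + 1), (((n + m).choose j : ℕ) : ℚ)) := by
  have reverse : (fun i j : Fin (m + 1) => ((n + m - (i : ℕ)).choose (ℓ + m - (j : ℕ)) : ℚ)) =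
      (of fun i j : Fin (m + 1) => ((n + i).choose (ℓ + j) : ℚ)).submatrix
        Fin.revPerm Fin.revPerm := by
    ext i j
    rw [submatrix_apply, of_apply, Fin.revPerm_apply, Fin.revPerm_apply, Fin.val_rev, Fin.val_rev]
    congr 3 <;> omega
  rw [reverse, det_submatrix_equiv_self, det_choose_add_add h, prod_choose_add_div_prod_choose h,
    ← Nat.prod_range_succ_factorial, Nat.cast_prod]
end

section
/- For n, m, ℓ ∈ ℕ: ∏_{j=0}^{m} binom(n+j, ℓ) / binom(ℓ+j, ℓ) = ∏_{j=0}^{m} binom(n+m, ℓ+j) / binom(n+m, j), as an identity of rational numbers (assuming ℓ ≤ n so that all binomials are positive). -/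
/-!
Both sides have the common denominator `∏ j ≤ m, C(ℓ + j, ℓ)`: on the right, the identity
`C(N, ℓ + j) C(ℓ + j, ℓ) = C(N, j) C(N - j, ℓ)` turns the `j`-th factor into
`C(n + m - j, ℓ) / C(ℓ + j, ℓ)`, and reversing `j ↦ m - j` matches the numerators
`C(n + m - j, ℓ)` with the numerators `C(n + j, ℓ)` on the left.
-/

open Finset

theorem Nat.cast_choose_add_div_cast_choose_s11 {N j : ℕ} (ℓ : ℕ) (hj : j ≤ N) :
    ((N.choose (ℓ + j) : ℕ) : ℚ) / (N.choose j : ℕ) =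
      ((N - j).choose ℓ : ℕ) / ((ℓ + j).choose ℓ : ℕ) := by
  have hNj : ((N.choose j : ℕ) : ℚ) ≠ 0 := Nat.cast_ne_zero.2 (Nat.choose_pos hj).ne'
  have hℓj : (((ℓ + j).choose ℓ : ℕ) : ℚ) ≠ 0 :=
    Nat.cast_ne_zero.2 (Nat.choose_pos (Nat.le_add_right ℓ j)).ne'
  rw [div_eq_div_iff hNj hℓj]
  have key := Nat.choose_mul (n := N) (Nat.le_add_left j ℓ)
  rw [Nat.add_sub_cancel, ← Nat.choose_symm_add] at key
  exact_mod_cast key.trans (Nat.mul_comm _ _)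

theorem binomial_product_ratio_identity_general (n m ℓ : ℕ) :
    ∏ j ∈ Finset.range (m + 1),
        (((n + j).choose ℓ : ℕ) : ℚ) / (((ℓ + j).choose ℓ : ℕ) : ℚ)
      = ∏ j ∈ Finset.range (m + 1),
        (((n + m).choose (ℓ + j) : ℕ) : ℚ) / (((n + m).choose j : ℕ) : ℚ) := by
  have hRHS : ∏ j ∈ range (m + 1),
        (((n + m).choose (ℓ + j) : ℕ) : ℚ) / (((n + m).choose j : ℕ) : ℚ)
      = ∏ j ∈ range (m + 1),
        (((n + (m + 1 - 1 - j)).choose ℓ : ℕ) : ℚ) / (((ℓ + j).choose ℓ : ℕ) : ℚ) := by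
    refine prod_congr rfl fun j hj => ?_
    have hjm : j ≤ m := Nat.lt_succ_iff.1 (mem_range.1 hj)
    rw [Nat.cast_choose_add_div_cast_choose_s11 ℓ (by omega)]
    congr 4
    omega
  rw [hRHS, prod_div_distrib, prod_div_distrib,
    prod_range_reflect (fun j => (((n + j).choose ℓ : ℕ) : ℚ))]

/-- ∏_{j=0}^m binom(n+j,ℓ)/binom(ℓ+j,ℓ) = ∏_{j=0}^m binom(n+m,ℓ+j)/binom(n+m,j). -/
theorem binomial_product_ratio_identity (n m ℓ : ℕ) (h : ℓ ≤ n) :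
    ∏ j ∈ Finset.range (m + 1),
        (((n + j).choose ℓ : ℕ) : ℚ) / (((ℓ + j).choose ℓ : ℕ) : ℚ)
      = ∏ j ∈ Finset.range (m + 1),
        (((n + m).choose (ℓ + j) : ℕ) : ℚ) / (((n + m).choose j : ℕ) : ℚ) :=
  binomial_product_ratio_identity_general n m ℓ
end

section
/- Let H be the D × D matrix with entries H[u][v] = binom(T, T − K − v + u) for 0 ≤ u, v ≤ d = D−1 and a fixed integer K with D ≤ K ≤ T − D (all lower indices in range). Then det(H) = ∏_{j=0}^{d} binom(T+d, K+j) / binom(T+d, j). -/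
/-!
Left multiplication by the upper unitriangular matrix `(C(d - u, d - w))` is, by Vandermonde's
convolution `C(m + n, k) = ∑ C(m, i) C(n, k - i)`, exactly `d - u` steps of Pascal's rule on
row `u`: it turns `C(T, T - K - v + u)` into `C(T + d - u, T + d - K - v)`. With `N = T + d`, the
identity `C(N, u) C(N - u, N - k) = C(N, k) C(k, u)` then pulls out row factors `C(N, u)⁻¹` and
column factors `C(N, K + v)`, leaving the matrix `(C(K + v, u))`. Vandermonde's convolution
factors that one as a lower times an upper unitriangular matrix, so its determinant is `1`.
-/

open Finset Matrix

namespace Nat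

theorem add_choose_eq_sum_range {m n k N : ℕ} (hmk : m ≤ k) (hmN : m < N) :
    (m + n).choose k = ∑ i ∈ range N, m.choose i * n.choose (k - i) := by
  have trunc : ∀ M, m < M → ∑ i ∈ range M, m.choose i * n.choose (k - i) =
      ∑ i ∈ range (m + 1), m.choose i * n.choose (k - i) := fun M hM =>
    (sum_subset (range_subset_range.2 hM) fun i _ hi => by
      rw [choose_eq_zero_of_lt (by simpa using hi), zero_mul]).symm
  rw [add_choose_eq, Finset.Nat.sum_antidiagonal_eq_sum_range_succ_mk, trunc (k + 1) (by omega),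
    trunc N hmN]

theorem choose_mul_choose_sub_sub {n k : ℕ} (s : ℕ) (hkn : k ≤ n) :
    n.choose s * (n - s).choose (n - k) = n.choose k * k.choose s := by
  rcases le_or_gt s k with hsk | hks
  · rw [choose_mul hsk, choose_symm_of_eq_add (by omega : n - s = n - k + (k - s))]
  rcases le_or_gt s n with hsn | hns
  · rw [choose_eq_zero_of_lt (by omega : n - s < n - k), choose_eq_zero_of_lt hks, mul_zero,
      mul_zero]
  · rw [choose_eq_zero_of_lt hns, choose_eq_zero_of_lt hks, zero_mul, mul_zero]

end Nat

namespace Matrix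

variable {R : Type*} [CommRing R]

theorem det_sub_choose_sub_eq_one (d : ℕ) :
    det (of fun u w : Fin (d + 1) => ((d - u).choose (d - w) : R)) = 1 := by
  rw [det_of_isUpperTriangular]
  · simp
  · intro u w (h : w < u)
    simp [Nat.choose_eq_zero_of_lt (by omega : d - u < d - w)]

theorem det_choose_add_eq_det_add_sub_choose (T d : ℕ) (c : Fin (d + 1) → ℕ) :
    det (of fun u v : Fin (d + 1) => (T.choose (c v + u) : R)) =
      det (of fun u v : Fin (d + 1) => ((T + d - u).choose (c v + d) : R)) := by
  have hconv : (of fun u w : Fin (d + 1) => ((d - u).choose (d - w) : R)) *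
      of (fun u v : Fin (d + 1) => (T.choose (c v + u) : R)) =
      of fun u v : Fin (d + 1) => ((T + d - u).choose (c v + d) : R) := by
    ext u v
    have hentry : ∑ w : Fin (d + 1), (d - u).choose (d - w) * T.choose (c v + w) =
        (T + d - u).choose (c v + d) := by
      rw [Nat.add_sub_assoc (by omega), add_comm T,
        Nat.add_choose_eq_sum_range (N := d + 1) (by omega) (by omega), ← sum_range_reflect,
        ← Fin.sum_univ_eq_sum_range]
      refine sum_congr rfl fun w _ => ?_
      rw [show d + 1 - 1 - w = d - w by omega, show c v + d - (d - w) = c v + w by omega]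
    simp only [mul_apply, of_apply, ← hentry, Nat.cast_sum, Nat.cast_mul]
  rw [← hconv, det_mul, det_sub_choose_sub_eq_one, one_mul]

theorem det_add_choose_eq_one (A n : ℕ) :
    det (of fun u v : Fin n => ((A + v).choose u : R)) = 1 := by
  have hconv : (of fun u w : Fin n => if (w : ℕ) ≤ u then (A.choose (u - w) : R) else 0) *
      of (fun w v : Fin n => ((v : ℕ).choose w : R)) =
      of fun u v : Fin n => ((A + v).choose u : R) := by
    ext u v
    have hentry :
        ∑ w : Fin n, (if (w : ℕ) ≤ u then A.choose (u - w) else 0) * (v : ℕ).choose w =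
          (A + v).choose u := by
      rw [add_comm A, Nat.add_choose_eq, Finset.Nat.sum_antidiagonal_eq_sum_range_succ_mk,
        Fin.sum_univ_eq_sum_range
          (fun w => (if w ≤ u then A.choose (u - w) else 0) * (v : ℕ).choose w),
        ← sum_subset (range_subset_range.2 u.isLt) fun w _ hw => by simp_all]
      exact sum_congr rfl fun w hw => by simp [Nat.lt_succ_iff.1 (mem_range.1 hw), mul_comm]
    simp only [mul_apply, of_apply, ← hentry, Nat.cast_sum, Nat.cast_mul, Nat.cast_ite,
      Nat.cast_zero]
  rw [← hconv, det_mul, det_of_isLowerTriangular, det_of_isUpperTriangular]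
  · simp
  · intro w v (h : v < w)
    simp [Nat.choose_eq_zero_of_lt h]
  · intro u w (h : u < w)
    simp [not_le.2 h]

theorem det_sub_choose_sub {F : Type*} [Field F] [CharZero F] (N K d : ℕ) (h : K + d ≤ N) :
    det (of fun u v : Fin (d + 1) => ((N - u).choose (N - (K + v)) : F)) =
      ∏ j ∈ range (d + 1), (N.choose (K + j) : F) / N.choose j := by
  have hentry (u v : Fin (d + 1)) : ((N - u).choose (N - (K + v)) : F) =
      (N.choose u : F)⁻¹ * ((N.choose (K + v) : F) * ((K + v).choose u : F)) := by
    have hu : (N.choose u : F) ≠ 0 := Nat.cast_ne_zero.2 (Nat.choose_ne_zero (by omega))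
    rw [eq_inv_mul_iff_mul_eq₀ hu]
    exact_mod_cast Nat.choose_mul_choose_sub_sub u (by omega : K + v ≤ N)
  calc _ = det (of fun u v : Fin (d + 1) => (N.choose u : F)⁻¹ *
        of (fun u v : Fin (d + 1) => (N.choose (K + v) : F) *
          of (fun u v : Fin (d + 1) => ((K + v).choose u : F)) u v) u v) := by
        congr 1; ext u v; exact hentry u v
    _ = (∏ u : Fin (d + 1), (N.choose u : F)⁻¹) *
          ∏ v : Fin (d + 1), (N.choose (K + v) : F) := by
        rw [det_mul_column, det_mul_row, det_add_choose_eq_one, mul_one]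
    _ = _ := by
        rw [Fin.prod_univ_eq_prod_range (fun j => (N.choose j : F)⁻¹),
          Fin.prod_univ_eq_prod_range (fun j => (N.choose (K + j) : F)), prod_div_distrib,
          prod_inv_distrib, div_eq_mul_inv, mul_comm]

end Matrix

/-- Block determinant: det(binom(T, T - K - v + u))_{0 ≤ u,v ≤ d}
= ∏_{j=0}^d binom(T+d, K+j) / binom(T+d, j), for D ≤ K ≤ T - D, D = d+1. -/
theorem binomial_block_det (T d D K : ℕ) (hD : D = d + 1)
    (hK1 : D ≤ K) (hK2 : K ≤ T - D) :
    Matrix.det (fun u v : Fin D =>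
        ((T.choose (T - K - (v : ℕ) + (u : ℕ)) : ℕ) : ℚ))
    = ∏ j ∈ Finset.range (d + 1),
        (((T + d).choose (K + j) : ℕ) : ℚ) / (((T + d).choose j : ℕ) : ℚ) := by
  subst hD
  calc _ = det (of fun u v : Fin (d + 1) => ((T + d - u).choose (T - K - v + d) : ℚ)) :=
        det_choose_add_eq_det_add_sub_choose T d (fun v => T - K - v)
    _ = det (of fun u v : Fin (d + 1) => ((T + d - u).choose (T + d - (K + v)) : ℚ)) := by
        congr 1; ext u v
        rw [of_apply, of_apply, (by omega : T - K - v + d = T + d - (K + v))]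
    _ = _ := det_sub_choose_sub (T + d) K d (by omega)
end

section
/- In the monomial expansion of the Vandermonde-type product ∏_{1 ≤ i < j ≤ r} (a_i − a_j)^{E} over ℤ[a_1,...,a_r], the coefficient of the monomial ∏_{i=1}^{r} a_i^{E(r−i)} equals 1. -/
/-! In the lexicographic order with `X 0 > X 1 > ⋯`, each factor `X i - X j` with `i < j` is monic
with leading monomial `X i`. Hence the product is monic, and its leading monomial is
`∏ i, X i ^ (E * #{j | i < j})`, which is the monomial in question. -/

open MvPolynomial Finsupp
open scoped MonomialOrder

namespace MonomialOrder

variable {σ R : Type*} [CommRing R] (m : MonomialOrder σ)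

theorem degree_X_sub_X [Nontrivial R] {i j : σ} (h : single j 1 ≺[m] single i 1) :
    m.degree (X i - X j : MvPolynomial σ R) = single i 1 := by
  rw [degree_sub_of_lt, degree_X]
  rwa [degree_X, degree_X]

theorem monic_X_sub_X {i j : σ} (h : single j 1 ≺[m] single i 1) :
    m.Monic (X i - X j : MvPolynomial σ R) := by
  nontriviality R
  rw [Monic, leadingCoeff_sub_of_lt, leadingCoeff_X]
  rwa [degree_X, degree_X]

variable {m}

theorem Monic.degree_pow [Nontrivial R] {f : MvPolynomial σ R} (hf : m.Monic f) (n : ℕ) :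
    m.degree (f ^ n) = n • m.degree f :=
  degree_pow_of_pow_leadingCoeff_ne_zero (by simp [hf.leadingCoeff_eq_one])

theorem coeff_prod_sum_degree_of_monic {ι : Type*} {P : ι → MvPolynomial σ R} {s : Finset ι}
    (hP : ∀ i ∈ s, m.Monic (P i)) :
    coeff (∑ i ∈ s, m.degree (P i)) (∏ i ∈ s, P i) = 1 := by
  rw [coeff_prod_sum_degree]
  exact Finset.prod_eq_one fun i hi => (hP i hi).leadingCoeff_eq_one

end MonomialOrder

theorem Fin.sum_filter_lt_single_fst (r n : ℕ) :
    ∑ pr ∈ Finset.univ.filter (fun pr : Fin r × Fin r => pr.1 < pr.2), single pr.1 n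
      = equivFunOnFinite.symm fun i : Fin r => n * (r - 1 - (i : ℕ)) := by
  rw [Finset.sum_filter, Fintype.sum_prod_type, equivFunOnFinite_symm_eq_sum]
  refine Finset.sum_congr rfl fun i _ => ?_
  dsimp only
  rw [← Finset.sum_filter, Finset.filter_lt_eq_Ioi, Finset.sum_const, Fin.card_Ioi,
    smul_single, smul_eq_mul, mul_comm]

theorem vandermonde_power_leading_coeff_general (r E : ℕ) :
    MvPolynomial.coeff
      (Finsupp.equivFunOnFinite.symm fun i : Fin r => E * (r - 1 - (i : ℕ)))
      (∏ pr ∈ Finset.univ.filter (fun pr : Fin r × Fin r => pr.1 < pr.2),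
        (MvPolynomial.X pr.1 - MvPolynomial.X pr.2 : MvPolynomial (Fin r) ℤ) ^ E)
    = 1 := by
  set pairs := Finset.univ.filter (fun pr : Fin r × Fin r => pr.1 < pr.2)
  have hlt : ∀ pr ∈ pairs, single pr.2 1 ≺[MonomialOrder.lex] single pr.1 1 := fun pr hpr =>
    Finsupp.Lex.single_lt_iff.mpr (Finset.mem_filter.mp hpr).2
  have hdegree : ∀ pr ∈ pairs, MonomialOrder.lex.degree
      ((X pr.1 - X pr.2 : MvPolynomial (Fin r) ℤ) ^ E) = single pr.1 E := fun pr hpr => by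
    rw [((MonomialOrder.lex).monic_X_sub_X (hlt pr hpr)).degree_pow,
      MonomialOrder.degree_X_sub_X _ (hlt pr hpr), smul_single, smul_eq_mul, mul_one]
  rw [← Fin.sum_filter_lt_single_fst, ← Finset.sum_congr rfl hdegree]
  exact MonomialOrder.coeff_prod_sum_degree_of_monic fun pr hpr =>
    ((MonomialOrder.lex).monic_X_sub_X (hlt pr hpr)).pow

/-- In ∏_{i<j} (a_i - a_j)^E over ℤ[a_1,...,a_r], the coefficient of the monomial
∏_i a_i^{E(r-i)} is 1. -/
theorem vandermonde_power_leading_coeff (r E : ℕ) (hE : 0 < E) :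
    MvPolynomial.coeff
      (Finsupp.equivFunOnFinite.symm fun i : Fin r => E * (r - 1 - (i : ℕ)))
      (∏ pr ∈ Finset.univ.filter (fun pr : Fin r × Fin r => pr.1 < pr.2),
        (MvPolynomial.X pr.1 - MvPolynomial.X pr.2 : MvPolynomial (Fin r) ℤ) ^ E)
    = 1 :=
  vandermonde_power_leading_coeff_general r E
end

section
/- Fix a field F, pairwise distinct a_1, ..., a_r ∈ F, θ_1, ..., θ_r ∈ F, and integers t, M, s, d ≥ 0 with the number of variables (d+1)·r strictly greater than M·(d+s) + M(M+1)/2. Then there exist polynomials G_1, ..., G_r ∈ F[x], not all zero, each of degree at most d, such that the polynomial F(x) = ∑_{i=1}^{r} G_i(x)·(x + a_i)^{t+M−1+s} vanishes to order at least M at every common root α ∈ F of the system {(x + a_i)^t = θ_i : 1 ≤ i ≤ r}. -/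
/-!
Write `w = M - 1 + s` and expand the `m`-th Hasse derivative of `∑ G i * (X + a i) ^ (t + w)` by
the Leibniz rule. For `m < M` every term still carries a factor `(X + a i) ^ t`, which at a common
root `α` equals `θ i`. Replacing that factor by `θ i` gives a polynomial in `X`, independent of
`α`, of degree at most `d + (w - m)`, whose value at `α` is the Hasse derivative at `α`. Asking
these `M` polynomials to vanish identically is a system of
`∑_{m < M} (d + s + M - m) = M (d + s) + M (M + 1) / 2` homogeneous linear equations in the
`(d + 1) r` coefficients of the `G i`, so it has a nonzero solution, and that solution works for
every common root at once.
-/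

open Polynomial Finset

namespace Polynomial

section CommRing

variable {R : Type*} [CommRing R]

theorem hasseDeriv_X_add_C_pow (a : R) (n k : ℕ) :
    hasseDeriv k ((X + C a) ^ n) = C (n.choose k : R) * (X + C a) ^ (n - k) := by
  ext i
  have hchoose : (i + k).choose k * n.choose (i + k) = n.choose k * (n - k).choose i := by
    rw [mul_comm, Nat.choose_mul (Nat.le_add_left k i), Nat.add_sub_cancel]
  have hcast := congrArg (Nat.cast : ℕ → R) hchoose
  push_cast at hcast
  rw [hasseDeriv_coeff, coeff_X_add_C_pow, coeff_C_mul, coeff_X_add_C_pow,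
    show n - (i + k) = n - k - i by omega]
  linear_combination a ^ (n - k - i) * hcast

theorem hasseDeriv_mul_X_add_C_pow (G : R[X]) (a : R) (n m : ℕ) :
    hasseDeriv m (G * (X + C a) ^ n) = ∑ k ∈ range (m + 1),
      C (n.choose (m - k) : R) * hasseDeriv k G * (X + C a) ^ (n - (m - k)) := by
  rw [hasseDeriv_mul, Nat.sum_antidiagonal_eq_sum_range_succ_mk]
  refine sum_congr rfl fun k _ => ?_
  rw [hasseDeriv_X_add_C_pow]
  ring

theorem X_sub_C_pow_dvd_of_eval_hasseDeriv_eq_zero {f : R[X]} {α : R} {M : ℕ}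
    (h : ∀ m < M, (hasseDeriv m f).eval α = 0) : (X - C α) ^ M ∣ f := by
  rw [X_sub_C_pow_dvd_iff, ← taylor_apply, X_pow_dvd_iff]
  simpa only [taylor_coeff] using h

variable {ι : Type*} [Fintype ι]

/-- `hasseDeriv m (∑ i, G i * (X + C (a i)) ^ (t + w))` with the factor `(X + C (a i)) ^ t` of
each term replaced by `θ i` (for `m ≤ w`, so that the exponent `w - m + k` is not truncated). -/
noncomputable def reducedHasseDeriv (a θ : ι → R) (t w m : ℕ) : (ι → R[X]) →ₗ[R] R[X] :=
  ∑ i, ∑ k ∈ range (m + 1), (θ i * (t + w).choose (m - k)) •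
    LinearMap.mulRight R ((X + C (a i)) ^ (w - m + k)) ∘ₗ hasseDeriv k ∘ₗ LinearMap.proj i

theorem reducedHasseDeriv_apply (a θ : ι → R) (t w m : ℕ) (G : ι → R[X]) :
    reducedHasseDeriv a θ t w m G = ∑ i, ∑ k ∈ range (m + 1),
      C (θ i * (t + w).choose (m - k)) * hasseDeriv k (G i) * (X + C (a i)) ^ (w - m + k) := by
  simp [reducedHasseDeriv, smul_eq_C_mul, mul_assoc]

theorem eval_hasseDeriv_sum_mul_X_add_C_pow {a θ : ι → R} {α : R} {t w m : ℕ} (hm : m ≤ w)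
    (hα : ∀ i, (α + a i) ^ t = θ i) (G : ι → R[X]) :
    (hasseDeriv m (∑ i, G i * (X + C (a i)) ^ (t + w))).eval α =
      (reducedHasseDeriv a θ t w m G).eval α := by
  simp only [map_sum, hasseDeriv_mul_X_add_C_pow, reducedHasseDeriv_apply, eval_finsetSum]
  refine sum_congr rfl fun i _ => sum_congr rfl fun k hk => ?_
  rw [show t + w - (m - k) = t + (w - m + k) by grind, pow_add]
  simp only [eval_mul, eval_C, eval_pow, eval_add, eval_X, hα]
  ring

theorem natDegree_reducedHasseDeriv_le (a θ : ι → R) (t w m : ℕ) {G : ι → R[X]} {d : ℕ}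
    (hG : ∀ i, (G i).natDegree ≤ d) :
    (reducedHasseDeriv a θ t w m G).natDegree ≤ d + (w - m) := by
  rw [reducedHasseDeriv_apply]
  refine natDegree_sum_le_of_forall_le _ _ fun i _ =>
    natDegree_sum_le_of_forall_le _ _ fun k _ => ?_
  rcases lt_or_ge d k with hdk | hkd
  · rw [hasseDeriv_eq_zero_of_lt_natDegree _ k ((hG i).trans_lt hdk), mul_zero, zero_mul,
      natDegree_zero]
    exact Nat.zero_le _
  calc _ ≤ (d - k) + (w - m + k) := by
        refine natDegree_mul_le_of_le ?_ ?_
        · exact (natDegree_C_mul_le _ _).trans <| (natDegree_hasseDeriv_le _ k).trans (Nat.sub_le_sub_right (hG i) k)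
        · simpa using natDegree_pow_le_of_le (w - m + k)
            (natDegree_add_C.trans_le (natDegree_X_le (R := R)))
    _ ≤ d + (w - m) := by omega

end CommRing

theorem finrank_degreeLT (K : Type*) [Field K] (n : ℕ) : Module.finrank K K[X]_n = n := by
  simp [(degreeLTEquiv K n).finrank_eq]

theorem exists_ne_zero_forall_eq_zero_of_natDegree_le {K V ι : Type*} [Field K]
    [AddCommGroup V] [Module K V] [Fintype ι] (L : ι → V →ₗ[K] K[X]) (N : ι → ℕ)
    (hL : ∀ j v, (L j v).natDegree ≤ N j) (hdim : ∑ j, (N j + 1) < Module.finrank K V) :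
    ∃ v ≠ 0, ∀ j, L j v = 0 := by
  have : FiniteDimensional K V := Module.finite_of_finrank_pos (by omega)
  let Φ : V →ₗ[K] ((j : ι) → K[X]_(N j + 1)) := LinearMap.pi fun j =>
    (L j).codRestrict _ fun v => by
      rw [degreeLT_succ_eq_degreeLE, mem_degreeLE]
      exact natDegree_le_iff_degree_le.mp (hL j v)
  have hcod : Module.finrank K ((j : ι) → K[X]_(N j + 1)) = ∑ j, (N j + 1) := by
    simp [Module.finrank_pi_fintype, finrank_degreeLT]
  obtain ⟨v, hvΦ, hv0⟩ := Submodule.exists_mem_ne_zero_of_ne_bot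
    (LinearMap.ker_ne_bot_of_finrank_lt (f := Φ) (hcod ▸ hdim))
  exact ⟨v, hv0, fun j => congrArg Subtype.val (congrFun (LinearMap.mem_ker.mp hvΦ) j)⟩

end Polynomial

theorem Finset.sum_range_sub_eq (M : ℕ) : ∑ m ∈ range M, (M - m) = M * (M + 1) / 2 := by
  calc ∑ m ∈ range M, (M - m) = ∑ m ∈ range (M + 1), m := by
        rw [sum_range_succ', add_zero, ← sum_range_reflect]
        exact sum_congr rfl fun m hm => by have := mem_range.mp hm; omega
    _ = M * (M + 1) / 2 := by rw [sum_range_id, Nat.add_sub_cancel, mul_comm]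

open Polynomial in
theorem auxiliary_polynomial_exists_general {F : Type*} [Field F] (r t M s d : ℕ)
    (a θ : Fin r → F)
    (hcount : M * (d + s) + M * (M + 1) / 2 < (d + 1) * r) :
    ∃ G : Fin r → F[X], (∃ i, G i ≠ 0) ∧ (∀ i, (G i).degree ≤ (d : ℕ)) ∧
      ∀ α : F, (∀ i, (α + a i) ^ t = θ i) →
        (X - C α) ^ M ∣ ∑ i, G i * (X + C (a i)) ^ (t + M - 1 + s) := by
  set w := M - 1 + s
  let L : Fin M → (Fin r → F[X]_(d + 1)) →ₗ[F] F[X] := fun m =>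
    reducedHasseDeriv a θ t w m ∘ₗ LinearMap.piMap fun _ => (F[X]_(d + 1)).subtype
  have hdeg (v : Fin r → F[X]_(d + 1)) (i : Fin r) : (v i : F[X]).natDegree ≤ d :=
    natDegree_le_iff_degree_le.mpr <| mem_degreeLE.mp <|
      degreeLT_succ_eq_degreeLE (R := F) ▸ (v i).2
  have hcard : ∑ m : Fin M, (d + (w - m) + 1) = M * (d + s) + M * (M + 1) / 2 := by
    have hterm : ∀ m ∈ range M, d + (w - m) + 1 = (d + s) + (M - m) := fun m hm => by
      have := mem_range.mp hm; omega
    rw [Fin.sum_univ_eq_sum_range (fun m => d + (w - m) + 1) M, sum_congr rfl hterm,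
      sum_add_distrib, sum_const, card_range, smul_eq_mul, sum_range_sub_eq]
  have hfinrank : Module.finrank F (Fin r → F[X]_(d + 1)) = (d + 1) * r := by
    simp [Module.finrank_pi_fintype, finrank_degreeLT, mul_comm]
  obtain ⟨v, hv0, hv⟩ := exists_ne_zero_forall_eq_zero_of_natDegree_le L _
    (fun m v => natDegree_reducedHasseDeriv_le _ _ _ _ _ (hdeg v)) (by rwa [hcard, hfinrank])
  refine ⟨fun i => v i, ?_, fun i => natDegree_le_iff_degree_le.mp (hdeg v i), fun α hα => ?_⟩
  · obtain ⟨i, hi⟩ := Function.ne_iff.mp hv0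
    exact ⟨i, by simpa using hi⟩
  refine X_sub_C_pow_dvd_of_eval_hasseDeriv_eq_zero fun m hm => ?_
  rw [show t + M - 1 + s = t + w by omega, eval_hasseDeriv_sum_mul_X_add_C_pow (by omega) hα]
  exact (congrArg (eval α) (hv ⟨m, hm⟩)).trans eval_zero

open Polynomial in
/-- Existence of the auxiliary polynomial: given (d+1)r > M(d+s) + M(M+1)/2, there
exist G_i, not all zero, of degree ≤ d, such that F = ∑ G_i (x+a_i)^{t+M-1+s}
vanishes to order ≥ M at every common root of the system (x+a_i)^t = θ_i. -/
theorem auxiliary_polynomial_exists {F : Type*} [Field F] (r t M s d : ℕ)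
    (a θ : Fin r → F) (ha : Function.Injective a)
    (hcount : M * (d + s) + M * (M + 1) / 2 < (d + 1) * r) :
    ∃ G : Fin r → F[X], (∃ i, G i ≠ 0) ∧ (∀ i, (G i).degree ≤ (d : ℕ)) ∧
      ∀ α : F, (∀ i, (α + a i) ^ t = θ i) →
        (X - C α) ^ M ∣ ∑ i, G i * (X + C (a i)) ^ (t + M - 1 + s) :=
  auxiliary_polynomial_exists_general r t M s d a θ hcount
end

section
/- Let T, d, D = d+1 be positive integers, and let K be an integer with 0 ≤ K and K + d ≤ T. The D × D matrix H with entries H[u][v] = binom(T, T − K + u − v) (0 ≤ u, v ≤ d) can be transformed by row operations into the matrix H' with entries H'[u][v] = binom(T + d − u, T − K + d − v); in particular det(H) = det(H'). -/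
/-!
The row operations are left multiplication by the upper unitriangular matrix
`P u w = binom(d - u, d - w)`: with `c = T - K`, Vandermonde's identity gives
`binom(T + (d - u), c + d - v) = ∑_w binom(d - u, d - w) binom(T, c + w - v)`, i.e. `H' = P * H`,
and `det P = 1`. The bound `K + d ≤ T`, i.e. `d ≤ c`, keeps every natural subtraction in the
binomial arguments exact.
-/

open Finset Matrix

theorem Nat.add_choose_eq_sum_range_s18 (t : ℕ) {m n N : ℕ} (hmn : m ≤ n) (hmN : m ≤ N) :
    (t + m).choose n = ∑ k ∈ range (N + 1), m.choose k * t.choose (n - k) := by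
  have vanish : ∀ M, m ≤ M → ∑ k ∈ range (M + 1), m.choose k * t.choose (n - k) =
      ∑ k ∈ range (m + 1), m.choose k * t.choose (n - k) := fun M hM =>
    (sum_subset (range_subset_range.2 (by omega)) fun k _ hk => by
      rw [Nat.choose_eq_zero_of_lt (by simpa using hk), zero_mul]).symm
  rw [vanish N hmN, ← vanish n hmn, add_comm, Nat.add_choose_eq,
    Finset.Nat.sum_antidiagonal_eq_sum_range_succ (fun i j => m.choose i * t.choose j)]

theorem Nat.add_sub_choose_eq_sum_range {t c d u v : ℕ} (hdc : d ≤ c) (hu : u ≤ d)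
    (hv : v ≤ d) : (t + d - u).choose (c + d - v) =
      ∑ w ∈ range (d + 1), (d - u).choose (d - w) * t.choose (c + w - v) := by
  rw [show t + d - u = t + (d - u) by omega,
    t.add_choose_eq_sum_range_s18 (m := d - u) (N := d) (by omega) (Nat.sub_le d u), ← sum_range_reflect]
  refine sum_congr rfl fun w hw => ?_
  have hwd : w ≤ d := Nat.lt_succ_iff.mp (mem_range.mp hw)
  rw [show d + 1 - 1 - w = d - w by omega, show c + d - v - (d - w) = c + w - v by omega]

section

variable (R : Type*) [CommRing R]

def reflectedPascal (d : ℕ) : Matrix (Fin (d + 1)) (Fin (d + 1)) R :=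
  of fun u w => ((d - u : ℕ).choose (d - w) : R)

theorem reflectedPascal_blockTriangular (d : ℕ) : (reflectedPascal R d).BlockTriangular id :=
  fun u w hwu => by
    simp only [reflectedPascal, of_apply]
    rw [Nat.choose_eq_zero_of_lt (by simp only [id] at hwu; omega), Nat.cast_zero]

theorem det_reflectedPascal (d : ℕ) : (reflectedPascal R d).det = 1 := by
  rw [det_of_isUpperTriangular (reflectedPascal_blockTriangular R d)]
  exact prod_eq_one fun u _ => by simp [reflectedPascal]

theorem reflectedPascal_mul_choose {t c d : ℕ} (hdc : d ≤ c) :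
    reflectedPascal R d * of (fun u v : Fin (d + 1) => (t.choose (c + u - v) : R)) =
      of fun u v : Fin (d + 1) => ((t + d - u).choose (c + d - v) : R) := by
  ext u v
  simp only [mul_apply, reflectedPascal, of_apply]
  rw [Nat.add_sub_choose_eq_sum_range hdc (Fin.is_le u) (Fin.is_le v),
    Fin.sum_univ_eq_sum_range (fun w => ((d - u : ℕ).choose (d - w) : R) * t.choose (c + w - v))]
  push_cast
  rfl

end

/-- Row operations transform the binomial block matrix H[u][v] = binom(T, T-K+u-v)
into H'[u][v] = binom(T+d-u, T-K+d-v); in particular the determinants agree. -/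
theorem binomial_block_row_transform (T d D K : ℕ) (hD : D = d + 1)
    (hK : K + d ≤ T) :
    Matrix.det (fun u v : Fin D =>
        ((T.choose (T - K + (u : ℕ) - (v : ℕ)) : ℕ) : ℚ))
    = Matrix.det (fun u v : Fin D =>
        (((T + d - (u : ℕ)).choose (T - K + d - (v : ℕ)) : ℕ) : ℚ)) := by
  subst hD
  have hdet := congrArg det (reflectedPascal_mul_choose ℚ (t := T) (show d ≤ T - K by omega))
  rwa [det_mul, det_reflectedPascal, one_mul] at hdet
end

section
/- Let r, M be positive integers with M = r/2 (r even), t a positive integer, s ≤ r − 1, and D = (t + M + s − 1)/(r − 1). If r ≤ (2/√5)·√t + 1, then the inequality M·(D − 1 + s) + M(M+1)/2 < D·r holds; equivalently, the quadratic condition 5r² − 17r − (4t − 14) < 0 is satisfied. -/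
/-! With `r = 2M` and `D = ⌊(t + M + s - 1)/(2M - 1)⌋`, the inequality reduces, after dividing by `M`,
to `M + 2s ≤ 2D`. Since `D` is a floor, `(2M - 1)(D + 1)` exceeds `t + M + s - 1`, and the hypothesis on `r`
is `5(2M - 1)² ≤ 4t`, which leaves enough room for this even in the worst case `s = 2M - 1`. -/

lemma five_mul_sq_le_four_mul_of_le_two_div_sqrt_five_mul_sqrt {a y : ℝ} (ha : 0 ≤ a) (hy : 0 ≤ y)
    (h : a ≤ 2 / √5 * √y) : 5 * a ^ 2 ≤ 4 * y := by
  have hsq : a ^ 2 ≤ (2 / √5 * √y) ^ 2 := pow_le_pow_left₀ ha h 2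
  rw [mul_pow, div_pow, Real.sq_sqrt (by norm_num), Real.sq_sqrt hy] at hsq
  linarith

lemma add_two_mul_le_two_mul_div {M s t : ℕ} (hM : 1 ≤ M) (hs : s ≤ 2 * M - 1)
    (ht : 5 * (2 * M - 1) ^ 2 ≤ 4 * t) :
    M + 2 * s ≤ 2 * ((t + M + s - 1) / (2 * M - 1)) := by
  set D := (t + M + s - 1) / (2 * M - 1)
  have hfloor : t + M + s - 1 < (2 * M - 1) * (D + 1) := Nat.lt_mul_div_succ _ (by omega)
  zify [hM, show 1 ≤ 2 * M by omega, show 1 ≤ t + M + s by omega] at hfloor hs ht ⊢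
  nlinarith [mul_nonneg (sub_nonneg.2 hs) (sub_nonneg.2 (show (1 : ℤ) ≤ M by exact_mod_cast hM))]

lemma mul_add_triangle_lt_of_add_two_mul_le {M D s : ℕ} (hM : 0 < M) (h : M + 2 * s ≤ 2 * D) :
    M * (D - 1 + s) + M * (M + 1) / 2 < D * (2 * M) := by
  have hdiv : 2 * (M * (M + 1) / 2) = M * (M + 1) :=
    Nat.mul_div_cancel' (Nat.even_mul_succ_self M).two_dvd
  have hlin : 2 * (D - 1 + s) + (M + 1) < 4 * D := by omega
  have hmul := Nat.mul_lt_mul_of_pos_left hlin hM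
  refine Nat.lt_of_mul_lt_mul_left (a := 2) ?_
  calc 2 * (M * (D - 1 + s) + M * (M + 1) / 2) = M * (2 * (D - 1 + s) + (M + 1)) := by
        rw [Nat.mul_add, hdiv]; ring
    _ < M * (4 * D) := hmul
    _ = 2 * (D * (2 * M)) := by ring

theorem parameter_counting_inequality_general (r M t s D : ℕ)
    (hM0 : 0 < M)
    (hrev : 2 ∣ r) (hM : M = r / 2) (hs : s ≤ r - 1)
    (hD : D = (t + M + s - 1) / (r - 1))
    (hr : (r : ℝ) ≤ 2 / Real.sqrt 5 * Real.sqrt t + 1) :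
    M * (D - 1 + s) + M * (M + 1) / 2 < D * r := by
  obtain rfl : r = 2 * M := by omega
  have h5 : 5 * (2 * M - 1) ^ 2 ≤ 4 * t := by
    have hcast : ((2 * M - 1 : ℕ) : ℝ) = 2 * M - 1 := by
      push_cast [Nat.cast_sub (show 1 ≤ 2 * M by omega)]; ring
    have hreal := five_mul_sq_le_four_mul_of_le_two_div_sqrt_five_mul_sqrt (Nat.cast_nonneg _)
      (Nat.cast_nonneg t) (by rw [hcast]; push_cast at hr; linarith)
    exact_mod_cast hreal
  subst hD
  exact mul_add_triangle_lt_of_add_two_mul_le hM0 (add_two_mul_le_two_mul_div hM0 hs h5)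

/-- The parameter-counting inequality: with M = r/2, s ≤ r-1,
D = (t+M+s-1)/(r-1) and r ≤ (2/√5)√t + 1, we have
M(D-1+s) + M(M+1)/2 < D·r. -/
theorem parameter_counting_inequality (r M t s D : ℕ)
    (hr0 : 0 < r) (hM0 : 0 < M) (ht : 0 < t)
    (hrev : 2 ∣ r) (hM : M = r / 2) (hs : s ≤ r - 1)
    (hD : D = (t + M + s - 1) / (r - 1))
    (hr : (r : ℝ) ≤ 2 / Real.sqrt 5 * Real.sqrt t + 1) :
    M * (D - 1 + s) + M * (M + 1) / 2 < D * r :=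
  parameter_counting_inequality_general r M t s D hM0 hrev hM hs hD hr
end
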